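/- Let R be a commutative ring, S ≥ 2, N, D natural numbers, a : Fin (S−1) → R, b : Fin S → R, a₀ ∈ R and j ∈ Fin (S−1). Define the (2S−1)×(2S−1) matrix M over R with rows indexed by (Fin S) ⊕ (Fin (S−1)) (relator rows r₁,…,r_S, then commutator rows s₁,…,s_{S−1}) and columns indexed by (Fin (S−1)) ⊕ (Fin S), where the column of b_j is replaced by the column of a₀: that column has entry g_N(a₀) in every relator row rᵢ (1 ≤ i ≤ S) and 0 in every commutator row; the remaining entries are: for all i ∈ Fin (S−1), row rᵢ has −g_N(aᵢ) in column aᵢ; for i ≠ j, row rᵢ has −aᵢᴺ·g_D(bᵢ) in column bᵢ; row r_S has −g_D(b_S) in column b_S; row s_j has 1 − b_j in column a_j; for i ≠ j, row sᵢ has 1 − bᵢ in column aᵢ and aᵢ − 1 in column bᵢ; all other entries are 0. Then det M = ±g_N(a₀)·g_D(b_S)·(1 − b_j)·∏_{i ∈ Fin(S−1), i ≠ j} (1 − aᵢᴺ·bᵢᴰ), i.e. det M equals this product up to sign. (This is the Type III.j minor of the Alexander matrix of the tst link [Φ^μ(n(τ), d(τ), M)] with M even.) -/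
import Mathlib

set_option maxHeartbeats 1000000

/-- The geometric sum `g_m(x) = ∑_{k=0}^{m-1} xᵏ`, the group-ring analogue of `(1-xᵐ)/(1-x)`. -/
def geomSum {R : Type*} [CommRing R] (m : ℕ) (x : R) : R := ∑ k ∈ Finset.range m, x ^ k

lemma geomSum_mul' {R : Type*} [CommRing R] (m : ℕ) (x : R) :
    geomSum m x * (x - 1) = x ^ m - 1 := geom_sum_mul x m

open Matrix in
/-- Type III.j minor of the Alexander matrix of a tst link with `M` even: the column of
`b_j` is replaced by the column of `a₀`.
Rows: `Sum.inl i` = relator row `r_{i+1}` (`i : Fin S`), `Sum.inr s` = commutator row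
`s_{s+1}` (`s : Fin (S-1)`).  Columns: `Sum.inl c` = column of `b_{c+1}` (`c : Fin S`),
`Sum.inr c` = column of `a_{c+1}` (`c : Fin (S-1)`), with the column
`Sum.inl (Fin.castLE _ j)` (the column of `b_j`) replaced by the `a₀`-column.
The conclusion is stated up to sign. -/
theorem typeIII_minor_even {R : Type*} [CommRing R] (S N D : ℕ) (hS : 2 ≤ S)
    (a : Fin (S - 1) → R) (b : Fin S → R) (a₀ : R) (j : Fin (S - 1))
    (M : Matrix (Fin S ⊕ Fin (S - 1)) (Fin S ⊕ Fin (S - 1)) R)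
    (h_rb : ∀ (i : Fin S) (c : Fin S), M (Sum.inl i) (Sum.inl c) =
      if c = Fin.castLE (Nat.sub_le S 1) j then geomSum N a₀
      else if c = i then
        (if h : (i : ℕ) < S - 1 then -((a ⟨i, h⟩) ^ N * geomSum D (b c))
         else -(geomSum D (b c)))
      else 0)
    (h_ra : ∀ (i : Fin S) (c : Fin (S - 1)), M (Sum.inl i) (Sum.inr c) =
      if (c : ℕ) = (i : ℕ) then -(geomSum N (a c)) else 0)
    (h_sb : ∀ (s : Fin (S - 1)) (c : Fin S), M (Sum.inr s) (Sum.inl c) =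
      if c = Fin.castLE (Nat.sub_le S 1) j then 0
      else if (c : ℕ) = (s : ℕ) then a s - 1 else 0)
    (h_sa : ∀ (s : Fin (S - 1)) (c : Fin (S - 1)), M (Sum.inr s) (Sum.inr c) =
      if c = s then 1 - b (Fin.castLE (Nat.sub_le S 1) s) else 0) :
    M.det = geomSum N a₀ * geomSum D (b ⟨S - 1, Nat.sub_lt (by omega) Nat.one_pos⟩) *
        (1 - b (Fin.castLE (Nat.sub_le S 1) j)) *
        ∏ i ∈ Finset.univ.erase j, (1 - (a i) ^ N * (b (Fin.castLE (Nat.sub_le S 1) i)) ^ D) ∨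
    M.det = -(geomSum N a₀ * geomSum D (b ⟨S - 1, Nat.sub_lt (by omega) Nat.one_pos⟩) *
        (1 - b (Fin.castLE (Nat.sub_le S 1) j)) *
        ∏ i ∈ Finset.univ.erase j, (1 - (a i) ^ N * (b (Fin.castLE (Nat.sub_le S 1) i)) ^ D)) := by
  classical
  have hjlt : (j : ℕ) < S - 1 := j.isLt
  let cst : Fin (S - 1) → Fin S := Fin.castLE (Nat.sub_le S 1)
  let j' : Fin S := cst j
  let lst : Fin S := ⟨S - 1, Nat.sub_lt (by omega) Nat.one_pos⟩
  let T := {i : Fin (S - 1) // i ≠ j}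
  -- value facts
  have hcv : ∀ i : Fin (S - 1), ((cst i : Fin S) : ℕ) = (i : ℕ) := fun _ => rfl
  have hjv : ((j' : Fin S) : ℕ) = (j : ℕ) := rfl
  have hlv : ((lst : Fin S) : ℕ) = S - 1 := rfl
  have hcst_inj : ∀ x y : Fin (S - 1), cst x = cst y ↔ x = y := by
    intro x y; simp [cst, Fin.ext_iff]
  have hcstj : ∀ i : T, cst i.1 ≠ j' := by
    intro i h; exact i.2 ((hcst_inj _ _).1 h)
  have hcstlst : ∀ i : Fin (S - 1), cst i ≠ lst := by
    intro i h
    have := i.isLt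
    rw [Fin.ext_iff, hcv, hlv] at h; omega
  have hjlst : j' ≠ lst := hcstlst j
  let f : (Fin 2 × T) ⊕ Fin 3 → Fin S ⊕ Fin (S - 1) := fun x =>
    match x with
    | .inl (p, i) => if p = 0 then .inl (cst i.1) else .inr i.1
    | .inr q => if q = 0 then .inl j' else if q = 1 then .inr j else .inl lst
  have hinj : Function.Injective f := by
    clear h_rb h_ra h_sb h_sa M b a a₀
    have hvj : ∀ i : T, ((i.1 : Fin (S - 1)) : ℕ) ≠ (j : ℕ) := fun i hh => i.2 (Fin.ext hh)
    have hvl : ∀ i : T, ((i.1 : Fin (S - 1)) : ℕ) < S - 1 := fun i => i.1.isLt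
    intro x y hxy
    rcases x with ⟨p, i⟩ | q <;> rcases y with ⟨p2, i2⟩ | q2
    · fin_cases p <;> fin_cases p2
      · obtain rfl : i = i2 := Subtype.ext (by simpa [f, cst] using hxy); rfl
      · exact absurd hxy (by simp [f])
      · exact absurd hxy (by simp [f])
      · obtain rfl : i = i2 := Subtype.ext (by simpa [f] using hxy); rfl
    · exfalso
      have h1 := hvj i; have h2 := hvl i
      fin_cases p <;> fin_cases q2 <;>
        simp only [f] at hxy <;>
        simp_all [cst, j', lst, Fin.ext_iff, Subtype.ext_iff] <;> omega
    · exfalso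
      have h1 := hvj i2; have h2 := hvl i2
      fin_cases q <;> fin_cases p2 <;>
        simp only [f] at hxy <;>
        simp_all [cst, j', lst, Fin.ext_iff, Subtype.ext_iff] <;> omega
    · fin_cases q <;> fin_cases q2 <;>
        simp only [f] at hxy <;>
        simp_all [cst, j', lst, Fin.ext_iff] <;> omega
  have hcardT : Fintype.card T = S - 2 := by
    have : Fintype.card T = Fintype.card (Fin (S - 1)) - 1 := by
      simp [T, Fintype.card_subtype_compl]
    simp at this; omega
  have hbij : Function.Bijective f := by
    rw [Fintype.bijective_iff_injective_and_card]
    refine ⟨hinj, ?_⟩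
    simp [Fintype.card_sum, Fintype.card_prod, hcardT]
    omega
  let e : (Fin 2 × T) ⊕ Fin 3 ≃ Fin S ⊕ Fin (S - 1) := Equiv.ofBijective f hbij
  have he : ∀ x, e x = f x := fun _ => rfl
  have hdet0 : (M.submatrix e e).det = M.det := Matrix.det_submatrix_equiv_self e M
  set M' : Matrix _ _ R := M.submatrix e e with hM'def
  -- the blocks
  let A : Matrix (Fin 2 × T) (Fin 2 × T) R := Matrix.blockDiagonal fun i : T =>
    !![-(a i.1 ^ N * geomSum D (b (cst i.1))), -(geomSum N (a i.1));
       a i.1 - 1, 1 - b (cst i.1)]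
  let Dm : Matrix (Fin 3) (Fin 3) R :=
    !![geomSum N a₀, -(geomSum N (a j)), 0;
       0, 1 - b j', 0;
       geomSum N a₀, 0, -(geomSum D (b lst))]
  have hA : M'.toBlocks₁₁ = A := by
    ext ⟨p, i⟩ ⟨q, k⟩
    simp only [Matrix.toBlocks₁₁, Matrix.of_apply, hM'def, Matrix.submatrix_apply, he]
    fin_cases p <;> fin_cases q <;>
      by_cases h : i = k
    · subst h
      simp [f, A, cst, j', lst, Matrix.blockDiagonal_apply, h_rb, hcst_inj, hcv, i.1.isLt, i.2,
        Fin.castLE_inj, Fin.eta]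
    · have hki : k.1 ≠ i.1 := fun hh => h (Subtype.ext hh).symm
      simp [f, A, cst, j', lst, Matrix.blockDiagonal_apply, h_rb, hcst_inj, k.2, Fin.castLE_inj,
        hki, h, Ne.symm h]
    · subst h
      simp [f, A, cst, j', lst, Matrix.blockDiagonal_apply, h_ra, hcv]
    · have hkiv : ((k.1 : Fin (S - 1)) : ℕ) ≠ ((i.1 : Fin (S - 1)) : ℕ) :=
        fun hh => h (Subtype.ext (Fin.ext hh)).symm
      simp [f, A, cst, j', lst, Matrix.blockDiagonal_apply, h_ra, hcv, hkiv, h, Ne.symm h]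
    · subst h
      simp [f, A, cst, j', lst, Matrix.blockDiagonal_apply, h_sb, hcv, i.2, Fin.castLE_inj]
    · have hkiv : ((k.1 : Fin (S - 1)) : ℕ) ≠ ((i.1 : Fin (S - 1)) : ℕ) :=
        fun hh => h (Subtype.ext (Fin.ext hh)).symm
      simp [f, A, cst, j', lst, Matrix.blockDiagonal_apply, h_sb, hcv, k.2, Fin.castLE_inj,
        hkiv, h, Ne.symm h]
    · subst h
      simp [f, A, cst, j', lst, Matrix.blockDiagonal_apply, h_sa, cst]
    · have hki : k.1 ≠ i.1 := fun hh => h (Subtype.ext hh).symm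
      simp [f, A, cst, j', lst, Matrix.blockDiagonal_apply, h_sa, hki, h, Ne.symm h]
  have hZ : M'.toBlocks₂₁ = 0 := by
    ext q ⟨p, i⟩
    have h1 : ((i.1 : Fin (S - 1)) : ℕ) ≠ (j : ℕ) := fun hh => i.2 (Fin.ext hh)
    have h2 : ((i.1 : Fin (S - 1)) : ℕ) < S - 1 := i.1.isLt
    have h3 : cst i.1 ≠ j' := hcstj i
    have h4 : i.1 ≠ j := i.2
    have h5 : cst i.1 ≠ lst := hcstlst i.1
    have h6 : ((i.1 : Fin (S - 1)) : ℕ) ≠ S - 1 := by omega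
    simp only [Matrix.toBlocks₂₁, Matrix.of_apply, hM'def, Matrix.submatrix_apply, he,
      Matrix.zero_apply]
    fin_cases q <;> fin_cases p <;>
      simp [f, cst, j', lst, h_rb, h_sb, h_ra, h_sa, h1, h2, h3, h4, h5, h6, hcv, hjv, hlv,
        Fin.castLE_inj, Ne.symm h1, Ne.symm h4]
  have hD : M'.toBlocks₂₂ = Dm := by
    have h7 : ¬ ((lst : Fin S) : ℕ) < S - 1 := by rw [hlv]; omega
    have h8 : ((j : Fin (S - 1)) : ℕ) ≠ S - 1 := by omega
    have h9 : (S - 1 : ℕ) ≠ (j : ℕ) := by omega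
    ext q1 q2
    simp only [Matrix.toBlocks₂₂, Matrix.of_apply, hM'def, Matrix.submatrix_apply, he]
    fin_cases q1 <;> fin_cases q2 <;>
      simp [f, cst, j', lst, Dm, h_rb, h_ra, h_sb, h_sa, hjlst, Ne.symm hjlst, hjlt, h7, h8, h9,
        hcv, hjv, hlv, Ne.symm (hcstlst j), Fin.eta]
  have hdet1 : M'.det = A.det * Dm.det := by
    rw [← Matrix.fromBlocks_toBlocks M', hA, hZ, hD, Matrix.det_fromBlocks_zero₂₁]
  have hAdet : A.det = ∏ i : T, (a i.1 ^ N * (b (cst i.1)) ^ D - 1) := by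
    rw [Matrix.det_blockDiagonal]
    refine Finset.prod_congr rfl fun i _ => ?_
    rw [Matrix.det_fin_two_of]
    have h1 := geomSum_mul' D (b (cst i.1))
    have h2 := geomSum_mul' N (a i.1)
    linear_combination (a i.1 ^ N) * h1 + h2
  have hprodT : ∏ i : T, (a i.1 ^ N * (b (cst i.1)) ^ D - 1)
      = ∏ i ∈ Finset.univ.erase j, (a i ^ N * (b (cst i)) ^ D - 1) :=
    (Finset.prod_subtype (p := fun i => i ≠ j) (Finset.univ.erase j)
      (fun x => by simp) (fun i => a i ^ N * (b (cst i)) ^ D - 1)).symm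
  have hcardE : (Finset.univ.erase j).card = S - 2 := by
    rw [Finset.card_erase_of_mem (Finset.mem_univ j), Finset.card_univ, Fintype.card_fin]
    omega
  have hneg : ∏ i ∈ Finset.univ.erase j, (a i ^ N * (b (cst i)) ^ D - 1)
      = (-1 : R) ^ (S - 2) * ∏ i ∈ Finset.univ.erase j, (1 - a i ^ N * (b (cst i)) ^ D) := by
    rw [← hcardE, ← Finset.prod_const, ← Finset.prod_mul_distrib]
    exact Finset.prod_congr rfl fun i _ => by ring
  have hDdet : Dm.det = -(geomSum N a₀ * geomSum D (b lst) * (1 - b j')) := by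
    rw [Matrix.det_fin_three]
    show geomSum N a₀ * (1 - b j') * -(geomSum D (b lst)) - geomSum N a₀ * 0 * 0 -
        -(geomSum N (a j)) * 0 * -(geomSum D (b lst)) + -(geomSum N (a j)) * 0 * geomSum N a₀ +
        0 * 0 * 0 - 0 * (1 - b j') * geomSum N a₀ = _
    ring
  have hMdet : M.det = (-1 : R) ^ (S - 2) *
      (-(geomSum N a₀ * geomSum D (b lst) * (1 - b j') *
        ∏ i ∈ Finset.univ.erase j, (1 - a i ^ N * (b (cst i)) ^ D))) := by
    rw [← hdet0, hdet1, hAdet, hprodT, hneg, hDdet]; ring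
  rcases Nat.even_or_odd (S - 2) with hpar | hpar
  · right
    rw [hMdet, hpar.neg_one_pow]
    ring
  · left
    rw [hMdet, hpar.neg_one_pow]
    ring
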